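/- Let E be a real normed vector space, U ⊆ E open. Let Φ : E → ℍ be continuously differentiable on U with imaginary values, and let A : E → E → ℍ be twice continuously differentiable in the first variable, linear in the second, with imaginary values. Define the covariant derivative (d_AΦ) x v := fderiv ℝ Φ x v + (A x v)*(Φ x) − (Φ x)*(A x v), the curvature F x (v, w) := fderiv ℝ (fun y => A y w) x v − fderiv ℝ (fun y => A y v) x w + (A x v)*(A x w) − (A x w)*(A x v), and the real two-form β x (v, w) := re(conj(Φ x) * F x (v, w)). Then for every x ∈ U and u, v, w ∈ E: fderiv ℝ (fun y => β y (v, w)) x u − fderiv ℝ (fun y => β y (u, w)) x v + fderiv ℝ (fun y => β y (u, v)) x w = re(conj((d_AΦ) x u) * F x (v, w)) − re(conj((d_AΦ) x v) * F x (u, w)) + re(conj((d_AΦ) x w) * F x (u, v)). In form language this says that the three-form Z(Φ, A) = 2 Re(d_A Φ̄ ∧ F_A) is exact: Z(Φ, A) = 2 d β(Φ, A) with β(Φ, A) = Re(Φ̄ F_A). -/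

import Mathlib

/-!
Differentiating `β = Re(Φ̄ F_A)` by the Leibniz rule gives `dβ = Re(dΦ̄ ∧ F_A) + Re(Φ̄ dF_A)`.
The Bianchi identity `d_A F_A = dF_A + [A ∧ F_A] = 0`, which only uses the symmetry of second
derivatives, turns the last term into `-Re(Φ̄ [A ∧ F_A])`. Finally, for imaginary `a` the map
`[a, ·]` is skew for the pairing `Re(p̄ q)`, so `-Re(Φ̄ [A ∧ F_A]) = Re(conj([A, Φ]) ∧ F_A)`,
and the two terms combine to `Re(conj(d_AΦ) ∧ F_A)`.
-/

open scoped RealInnerProductSpace Quaternion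

namespace Quaternion

theorem re_mul_comm (a b : ℍ) : (a * b).re = (b * a).re := by
  simp only [re_mul]; ring

theorem re_star_commutator_mul {a : ℍ} (ha : a.re = 0) (p f : ℍ) :
    (star (a * p - p * a) * f).re = -(star p * (a * f - f * a)).re := by
  have hstar : star a = -a := star_eq_neg.mpr ha
  simp only [star_sub, star_mul, hstar, mul_neg, neg_mul, sub_neg_eq_add, add_mul,
    mul_sub, re_add, re_neg, re_sub, mul_assoc]
  rw [re_mul_comm a (star p * f), mul_assoc]
  ring

end Quaternion

theorem fderiv_re_star_mul_apply {E : Type*} [NormedAddCommGroup E] [NormedSpace ℝ E]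
    {Φ G : E → ℍ} {x : E} (hΦ : DifferentiableAt ℝ Φ x)
    (hG : DifferentiableAt ℝ G x) (u : E) :
    fderiv ℝ (fun y => (star (Φ y) * G y).re) x u =
      (star (fderiv ℝ Φ x u) * G x).re + (star (Φ x) * fderiv ℝ G x u).re := by
  have hinner : ∀ a b : ℍ, (star a * b).re = ⟪b, a⟫ := fun a b => by
    rw [Quaternion.inner_def, Quaternion.re_mul_comm]
  simp only [hinner]
  exact fderiv_inner_apply ℝ hG hΦ u

section Curvature

variable {E R : Type*} [NormedAddCommGroup E] [NormedSpace ℝ E] [NormedRing R] [NormedAlgebra ℝ R]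

noncomputable def curvature (A : E → E → R) (x v w : E) : R :=
  fderiv ℝ (fun y => A y w) x v - fderiv ℝ (fun y => A y v) x w + A x v * A x w - A x w * A x v

theorem hasFDerivAt_curvature {A : E → E → R} {x v w : E}
    (hAv : ContDiffAt ℝ 2 (fun y => A y v) x) (hAw : ContDiffAt ℝ 2 (fun y => A y w) x) :
    HasFDerivAt (fun y => curvature A y v w)
      ((fderiv ℝ (fderiv ℝ fun y => A y w) x).flip v - (fderiv ℝ (fderiv ℝ fun y => A y v) x).flip w
        + (A x v • fderiv ℝ (fun y => A y w) x
          + MulOpposite.op (A x w) • fderiv ℝ (fun y => A y v) x)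
        - (A x w • fderiv ℝ (fun y => A y v) x
          + MulOpposite.op (A x v) • fderiv ℝ (fun y => A y w) x))
      x := by
  have hD : ∀ {z}, ContDiffAt ℝ 2 (fun y => A y z) x → ∀ a,
      HasFDerivAt (fun y => fderiv ℝ (fun t => A t z) y a)
        ((fderiv ℝ (fderiv ℝ (fun t => A t z)) x).flip a) x := fun h a =>
    (((h.fderiv_right le_rfl).differentiableAt one_ne_zero).hasFDerivAt.clm_apply
      (hasFDerivAt_const a x)).congr_fderiv (by ext; simp)
  have hA : ∀ {z}, ContDiffAt ℝ 2 (fun y => A y z) x →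
      HasFDerivAt (fun y => A y z) (fderiv ℝ (fun y => A y z) x) x := fun h =>
    (h.differentiableAt two_ne_zero).hasFDerivAt
  exact (((hD hAw v).sub (hD hAv w)).add ((hA hAv).mul' (hA hAw))).sub ((hA hAw).mul' (hA hAv))

theorem fderiv_curvature_apply {A : E → E → R} {x v w : E}
    (hAv : ContDiffAt ℝ 2 (fun y => A y v) x) (hAw : ContDiffAt ℝ 2 (fun y => A y w) x) (u : E) :
    fderiv ℝ (fun y => curvature A y v w) x u =
      fderiv ℝ (fderiv ℝ (fun y => A y w)) x u v - fderiv ℝ (fderiv ℝ (fun y => A y v)) x u w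
        + (fderiv ℝ (fun y => A y v) x u * A x w + A x v * fderiv ℝ (fun y => A y w) x u)
        - (fderiv ℝ (fun y => A y w) x u * A x v + A x w * fderiv ℝ (fun y => A y v) x u) := by
  rw [(hasFDerivAt_curvature hAv hAw).fderiv]
  simp only [add_apply, sub_apply, ContinuousLinearMap.flip_apply, smul_apply, smul_eq_mul,
    op_smul_eq_mul]
  abel

theorem curvature_bianchi {A : E → E → R} {x : E} (hA : ∀ z, ContDiffAt ℝ 2 (fun y => A y z) x)
    (u v w : E) :
    fderiv ℝ (fun y => curvature A y v w) x u - fderiv ℝ (fun y => curvature A y u w) x v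
        + fderiv ℝ (fun y => curvature A y u v) x w =
      -((A x u * curvature A x v w - curvature A x v w * A x u)
        - (A x v * curvature A x u w - curvature A x u w * A x v)
        + (A x w * curvature A x u v - curvature A x u v * A x w)) := by
  have hsymm : ∀ z a b, fderiv ℝ (fderiv ℝ (fun y => A y z)) x a b
      = fderiv ℝ (fderiv ℝ (fun y => A y z)) x b a := fun z =>
    (hA z).isSymmSndFDerivAt (by simp [minSmoothness_of_isRCLikeNormedField])
  rw [fderiv_curvature_apply (hA v) (hA w), fderiv_curvature_apply (hA u) (hA w),
    fderiv_curvature_apply (hA u) (hA v)]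
  unfold curvature
  rw [hsymm w v u, hsymm v w u, hsymm u w v]
  noncomm_ring

end Curvature

theorem Z_is_exact_general {E : Type*} [NormedAddCommGroup E] [NormedSpace ℝ E]
    (U : Set E) (hU : IsOpen U)
    (Φ : E → Quaternion ℝ) (hΦ : ContDiffOn ℝ 1 Φ U)
    (A : E → E → Quaternion ℝ)
    (hAsmooth : ∀ v : E, ContDiffOn ℝ 2 (fun y => A y v) U)
    (hAim : ∀ x v, (A x v).re = 0)
    (dAΦ : E → E → Quaternion ℝ)
    (hdAΦ : ∀ x v, dAΦ x v = fderiv ℝ Φ x v + A x v * Φ x - Φ x * A x v)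
    (F : E → E → E → Quaternion ℝ)
    (hF : ∀ x v w, F x v w =
      fderiv ℝ (fun y => A y w) x v - fderiv ℝ (fun y => A y v) x w
        + A x v * A x w - A x w * A x v)
    (β : E → E → E → ℝ)
    (hβ : ∀ x v w, β x v w = (star (Φ x) * F x v w).re) :
    ∀ x ∈ U, ∀ u v w : E,
      fderiv ℝ (fun y => β y v w) x u - fderiv ℝ (fun y => β y u w) x v
          + fderiv ℝ (fun y => β y u v) x w
        = (star (dAΦ x u) * F x v w).re - (star (dAΦ x v) * F x u w).re
          + (star (dAΦ x w) * F x u v).re := by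
  intro x hx u v w
  obtain rfl : F = curvature A := funext fun y => funext fun v => funext (hF y v)
  obtain rfl : β = fun y v w => (star (Φ y) * curvature A y v w).re :=
    funext fun y => funext fun v => funext (hβ y v)
  have hA : ∀ z, ContDiffAt ℝ 2 (fun y => A y z) x := fun z =>
    (hAsmooth z).contDiffAt (hU.mem_nhds hx)
  have hΦx : DifferentiableAt ℝ Φ x :=
    (hΦ.contDiffAt (hU.mem_nhds hx)).differentiableAt one_ne_zero
  have hcov : ∀ a f, (star (dAΦ x a) * f).re =
      (star (fderiv ℝ Φ x a) * f).re - (star (Φ x) * (A x a * f - f * A x a)).re := fun a f => by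
    rw [hdAΦ, add_sub_assoc, star_add, add_mul, Quaternion.re_add,
      Quaternion.re_star_commutator_mul (hAim x a)]
    ring
  have hbianchi := congrArg (fun q => (star (Φ x) * q).re) (curvature_bianchi hA u v w)
  simp only [hcov,
    fderiv_re_star_mul_apply hΦx (hasFDerivAt_curvature (hA _) (hA _)).differentiableAt]
  simp only [mul_add, mul_sub, mul_neg, Quaternion.re_add, Quaternion.re_sub, Quaternion.re_neg]
    at hbianchi ⊢
  linear_combination hbianchi

/-- Exactness of the three-form `Z(Φ, A) = 2 Re(d_AΦ̄ ∧ F_A)`: with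
`β(Φ, A) = Re(Φ̄ F_A)`, one has `Z(Φ, A) = 2 dβ(Φ, A)`, expressed here componentwise:
the antisymmetrized derivative of `β` equals `Re(conj(d_AΦ) ∧ F_A)` componentwise. -/
theorem Z_is_exact {E : Type*} [NormedAddCommGroup E] [NormedSpace ℝ E]
    (U : Set E) (hU : IsOpen U)
    (Φ : E → Quaternion ℝ) (hΦ : ContDiffOn ℝ 1 Φ U)
    (hΦim : ∀ x ∈ U, (Φ x).re = 0)
    (A : E → E → Quaternion ℝ)
    (hAsmooth : ∀ v : E, ContDiffOn ℝ 2 (fun y => A y v) U)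
    (hAlin : ∀ x, IsLinearMap ℝ (A x))
    (hAim : ∀ x v, (A x v).re = 0)
    (dAΦ : E → E → Quaternion ℝ)
    (hdAΦ : ∀ x v, dAΦ x v = fderiv ℝ Φ x v + A x v * Φ x - Φ x * A x v)
    (F : E → E → E → Quaternion ℝ)
    (hF : ∀ x v w, F x v w =
      fderiv ℝ (fun y => A y w) x v - fderiv ℝ (fun y => A y v) x w
        + A x v * A x w - A x w * A x v)
    (β : E → E → E → ℝ)
    (hβ : ∀ x v w, β x v w = (star (Φ x) * F x v w).re) :
    ∀ x ∈ U, ∀ u v w : E,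
      fderiv ℝ (fun y => β y v w) x u - fderiv ℝ (fun y => β y u w) x v
          + fderiv ℝ (fun y => β y u v) x w
        = (star (dAΦ x u) * F x v w).re - (star (dAΦ x v) * F x u w).re
          + (star (dAΦ x w) * F x u v).re :=
  Z_is_exact_general U hU Φ hΦ A hAsmooth hAim dAΦ hdAΦ F hF β hβ
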